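/- For every s ∈ S and every g ∈ F_d, the function x ↦ q[s](g^{-1}·x) on ∂F_d is constant on each equivalence class of R_S; moreover this family separates the classes of R_S: for any x, y ∈ ∂F_d with (x, y) ∉ R_S, there exist g ∈ F_d and s ∈ S such that q[s](g^{-1}·x) ≠ q[s](g^{-1}·y). -/

import Mathlib

/-- The alphabet of the free group on `d` generators: a generator together with
a sign (`true` = the generator itself, `false` = its inverse). -/
abbrev Letter (d : ℕ) := Fin d × Bool

/-- The inverse of a letter. -/
def Letter.inv {d : ℕ} (a : Letter d) : Letter d := (a.1, !a.2)

/-- A sequence of letters is reduced if no letter is followed by its inverse. -/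
def IsReducedSeq {d : ℕ} (x : ℕ → Letter d) : Prop :=
  ∀ n, x (n + 1) ≠ Letter.inv (x n)

/-- The boundary `∂F_d` of the free group on `d` generators: the space of
infinite reduced words, topologized as a subspace of the product space
`(Fin d × Bool)^ℕ` (each factor discrete). -/
abbrev Boundary (d : ℕ) := {x : ℕ → Letter d // IsReducedSeq x}

/-- The number of letters cancelled at the junction when the (finite reduced)
word `u` is concatenated with the infinite reduced word `x`. -/
def cancelLen {d : ℕ} (u : List (Letter d)) (x : ℕ → Letter d) : ℕ :=
  Nat.findGreatest (fun k => ∀ i < k, u[u.length - 1 - i]? = some (Letter.inv (x i))) u.length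

/-- The reduction of the concatenation of a finite reduced word `u` with an
infinite reduced word `x`. -/
def concatReduce {d : ℕ} (u : List (Letter d)) (x : ℕ → Letter d) : ℕ → Letter d :=
  fun n =>
    let k := cancelLen u x
    let m := u.length - k
    if h : n < m then u[n]'(by omega) else x (k + (n - m))

open Classical in
/-- The boundary action of the free group on its boundary: left multiplication
followed by free reduction.  (The `if` always takes the `then` branch, since the
reduction of the concatenation of reduced words is again reduced; hence this is
exactly the usual boundary action `g · x`.) -/
noncomputable def boundaryAct {d : ℕ} (g : FreeGroup (Fin d)) (x : Boundary d) : Boundary d :=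
  if h : IsReducedSeq (concatReduce (FreeGroup.toWord g) x.1) then
    ⟨concatReduce (FreeGroup.toWord g) x.1, h⟩
  else x

/-- `x` is the boundary point `w^{+∞}`, the limit of the sequence `(wⁿ)ₙ₌₁^∞`:
for every `k` there is `N` such that for all `n ≥ N` the reduced word of `wⁿ`
has length at least `k` and its first `k` letters agree with those of `x`.
The point `w^{-∞}` is `(w⁻¹)^{+∞}`, i.e. `IsPlusLimit w⁻¹`. -/
def IsPlusLimit {d : ℕ} (w : FreeGroup (Fin d)) (x : Boundary d) : Prop :=
  ∀ k : ℕ, ∃ N : ℕ, ∀ n ≥ N,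
    k ≤ (FreeGroup.toWord (w ^ n)).length ∧
    ∀ i < k, (FreeGroup.toWord (w ^ n))[i]? = some (x.1 i)

/-- The relation `R_W = Δ ∪ {(g·w^{+∞}, g·w^{-∞}) : g ∈ F_d, w ∈ W ∪ W⁻¹}`
on the boundary `∂F_d`. -/
def RW {d : ℕ} (W : Set (FreeGroup (Fin d))) : Set (Boundary d × Boundary d) :=
  {p | p.1 = p.2} ∪
  {p | ∃ (g w : FreeGroup (Fin d)) (xp xm : Boundary d),
      (w ∈ W ∨ w⁻¹ ∈ W) ∧ IsPlusLimit w xp ∧ IsPlusLimit w⁻¹ xm ∧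
      p.1 = boundaryAct g xp ∧ p.2 = boundaryAct g xm}

open Classical in
/-- `p[w]` : the (`ℤ`-valued) indicator function of the cylinder set of the
reduced word of `w` in the boundary. -/
noncomputable def pFun {d : ℕ} (w : FreeGroup (Fin d)) : Boundary d → ℤ :=
  fun x =>
    if ∀ i < (FreeGroup.toWord w).length, (FreeGroup.toWord w)[i]? = some (x.1 i) then 1 else 0

/-- `q[s] = p[s] + p[s⁻¹]` for a generator `s`. -/
noncomputable def qFun {d : ℕ} (s : Fin d) : Boundary d → ℤ :=
  fun x => pFun (FreeGroup.of s) x + pFun (FreeGroup.of s)⁻¹ x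

/-- `q[sⁿ] = p[sⁿ] + p[s⁻ⁿ]` for a generator `s`. -/
noncomputable def qPow {d : ℕ} (s : Fin d) (n : ℕ) : Boundary d → ℤ :=
  fun x => pFun (FreeGroup.of s ^ n) x + pFun ((FreeGroup.of s ^ n)⁻¹) x

/-- The map `w ↦ ŵ` flipping the sign of the exponent of the last syllable of
the reduced word of `w`: if `w = s_{i(1)}^{n(1)} ⋯ s_{i(k)}^{n(k)}` then
`ŵ = s_{i(1)}^{n(1)} ⋯ s_{i(k-1)}^{n(k-1)} s_{i(k)}^{-n(k)}`.  (The final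
syllable is the maximal terminal run of equal letters of the reduced word.) -/
def hatWord {d : ℕ} (w : FreeGroup (Fin d)) : FreeGroup (Fin d) :=
  match (FreeGroup.toWord w).reverse with
  | [] => w
  | a :: _ =>
    let k := ((FreeGroup.toWord w).reverse.takeWhile (fun b => b == a)).length
    FreeGroup.mk ((FreeGroup.toWord w).take ((FreeGroup.toWord w).length - k) ++
      List.replicate k (Letter.inv a))

/-!
Each letter `a` acts on `∂F_d` by the reduced prepend `x ↦ a·x` (drop `x₀` if it is `a⁻¹`,
otherwise put `a` in front); these maps are involutive up to `a ↔ a⁻¹`, so they define a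
homomorphism `F_d → Perm ∂F_d`, and `concatReduce` agrees with it one letter at a time. The
function `q[s]` only reads the generator of the first letter.

Invariance: the pairs of `R_S` are translates of `(a^{+∞}, a^{-∞}) = (aaa⋯, a⁻¹a⁻¹a⁻¹⋯)`, and for
every `g` the points `g·a^{+∞}` and `g·a^{-∞}` begin with letters of the same generator: a final
letter of `g` with generator `a` fixes both points, and otherwise nothing cancels.

Separation: translating by the common prefix reduces to `x₀ ≠ y₀`. If the generators differ,
`q[x₀]` separates. Otherwise `y₀ = x₀⁻¹ =: a⁻¹`, and unless `(x, y) = (a^{+∞}, a^{-∞})` one of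
them, say `x`, begins with a run `a^m` followed by a letter of another generator; translating by
`a^{-m}` puts that letter in front of `x` and `a⁻¹` in front of `y`.
-/

open FreeGroup

section

variable {d : ℕ}

namespace Letter

@[simp] lemma inv_inv (a : Letter d) : a.inv.inv = a := by
  simp [Letter.inv]

lemma inv_ne_self (a : Letter d) : a.inv ≠ a := by
  simp [Letter.inv, Prod.ext_iff]

lemma eq_inv_comm {a b : Letter d} : a = b.inv ↔ b = a.inv := by
  constructor <;> rintro rfl <;> simp

lemma ne_inv_iff {a b : Letter d} : b ≠ a.inv ↔ (a.1 = b.1 → a.2 = b.2) := by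
  obtain ⟨i, s⟩ := a; obtain ⟨j, t⟩ := b
  cases s <;> cases t <;> simp [Letter.inv, eq_comm]

lemma eq_inv_of_ne_of_fst_eq {a b : Letter d} (hne : a ≠ b) (hfst : a.1 = b.1) : b = a.inv := by
  by_contra h
  exact hne (Prod.ext hfst (ne_inv_iff.mp h hfst))

lemma invRev_singleton (a : Letter d) : invRev [a] = [a.inv] := rfl

end Letter

section PrependSeq

variable {α : Type*}

def prependSeq (l : List α) (y : ℕ → α) : ℕ → α :=
  fun n => if h : n < l.length then l[n] else y (n - l.length)

lemma prependSeq_of_lt {l : List α} {y : ℕ → α} {n : ℕ} (h : n < l.length) :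
    prependSeq l y n = l[n] := dif_pos h

lemma prependSeq_of_le {l : List α} {y : ℕ → α} {n : ℕ} (h : l.length ≤ n) :
    prependSeq l y n = y (n - l.length) := dif_neg (by omega)

@[simp] lemma prependSeq_nil (y : ℕ → α) : prependSeq [] y = y := by
  funext n; simp [prependSeq]

@[simp] lemma prependSeq_cons_zero (a : α) (l : List α) (y : ℕ → α) :
    prependSeq (a :: l) y 0 = a := by
  simp [prependSeq]

@[simp] lemma prependSeq_cons_succ (a : α) (l : List α) (y : ℕ → α) (n : ℕ) :
    prependSeq (a :: l) y (n + 1) = prependSeq l y n := by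
  by_cases h : n < l.length
  · rw [prependSeq_of_lt (by simpa using h), prependSeq_of_lt h]; simp
  · rw [prependSeq_of_le (by simpa using h), prependSeq_of_le (by omega)]; simp

lemma prependSeq_append (l₁ l₂ : List α) (y : ℕ → α) :
    prependSeq (l₁ ++ l₂) y = prependSeq l₁ (prependSeq l₂ y) := by
  induction l₁ with
  | nil => simp
  | cons a l ih => funext n; cases n <;> simp [ih]

lemma prependSeq_head_tail (y : ℕ → α) : prependSeq [y 0] (fun n => y (n + 1)) = y := by
  funext n; cases n <;> simp

end PrependSeq

def consReduce (a : Letter d) (x : ℕ → Letter d) : ℕ → Letter d :=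
  if x 0 = a.inv then fun n => x (n + 1) else prependSeq [a] x

lemma consReduce_of_eq {a : Letter d} {x : ℕ → Letter d} (h : x 0 = a.inv) :
    consReduce a x = fun n => x (n + 1) := if_pos h

lemma consReduce_of_ne {a : Letter d} {x : ℕ → Letter d} (h : x 0 ≠ a.inv) :
    consReduce a x = prependSeq [a] x := if_neg h

lemma IsReducedSeq.consReduce {x : ℕ → Letter d} (hx : IsReducedSeq x) (a : Letter d) :
    IsReducedSeq (consReduce a x) := by
  by_cases h : x 0 = a.inv
  · rw [consReduce_of_eq h]; exact fun n => hx (n + 1)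
  · rw [consReduce_of_ne h]
    rintro (_ | n)
    · simpa using h
    · simpa using hx n

lemma consReduce_consReduce_inv {x : ℕ → Letter d} (hx : IsReducedSeq x) (a : Letter d) :
    consReduce a (consReduce a.inv x) = x := by
  by_cases h : x 0 = a
  · rw [consReduce_of_eq (a := a.inv) (by simpa using h), consReduce_of_ne (h ▸ hx 0), ← h,
      prependSeq_head_tail]
  · rw [consReduce_of_ne (a := a.inv) (by simpa using h), consReduce_of_eq (by simp)]
    funext n; simp

lemma getElem_invRev (r : List (Letter d)) (i : ℕ) (hi : i < (invRev r).length) :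
    (invRev r)[i] = (r[r.length - 1 - i]'(by simp at hi; omega)).inv := by
  simp [invRev, List.getElem_reverse, Letter.inv]

lemma cancelLen_append {v r : List (Letter d)} {x y : ℕ → Letter d}
    (hx : x = prependSeq (invRev r) y) (hJ : ∀ c ∈ v.getLast?, c ≠ (y 0).inv) :
    cancelLen (v ++ r) x = r.length := by
  have hr : ∀ i < r.length, (v ++ r)[(v ++ r).length - 1 - i]? = some (x i).inv := by
    intro i hi
    rw [hx, prependSeq_of_lt (by simpa using hi), getElem_invRev, Letter.inv_inv,
      List.getElem?_append_right (by simp; omega)]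
    simp only [List.length_append]
    rw [List.getElem?_eq_getElem (by omega)]
    congr 2; omega
  refine Nat.findGreatest_eq_iff.mpr ⟨by simp, fun _ => hr, fun n hrn hn hP => ?_⟩
  have hv : v ≠ [] := by rintro rfl; simp at hn; omega
  have hc := List.getLast?_eq_some_getLast hv
  have := hP r.length hrn
  rw [hx, prependSeq_of_le (by simp), invRev_length, Nat.sub_self, List.getElem?_append_left
    (by have := List.length_pos_iff.mpr hv; simp only [List.length_append]; omega)] at this
  simp only [List.length_append, show v.length + r.length - 1 - r.length = v.length - 1 by omega,
    ← List.getLast?_eq_getElem?, hc, Option.some.injEq] at this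
  exact hJ _ hc this

lemma concatReduce_append {v r : List (Letter d)} {x y : ℕ → Letter d}
    (hx : x = prependSeq (invRev r) y) (hJ : ∀ c ∈ v.getLast?, c ≠ (y 0).inv) :
    concatReduce (v ++ r) x = prependSeq v y := by
  funext n
  simp only [concatReduce, cancelLen_append hx hJ, List.length_append, Nat.add_sub_cancel]
  by_cases hn : n < v.length
  · rw [dif_pos hn, prependSeq_of_lt hn, List.getElem_append_left]
  · rw [dif_neg hn, prependSeq_of_le (by omega), hx, prependSeq_of_le (by simp)]
    simp

lemma exists_append_prependSeq_invRev (u : List (Letter d)) (x : ℕ → Letter d) :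
    ∃ (v r : List (Letter d)) (y : ℕ → Letter d),
      u = v ++ r ∧ x = prependSeq (invRev r) y ∧ ∀ c ∈ v.getLast?, c ≠ (y 0).inv := by
  set k := cancelLen u x
  have hku : k ≤ u.length := Nat.findGreatest_le _
  have hspec : ∀ i < k, u[u.length - 1 - i]? = some (x i).inv := fun i hi =>
    Nat.findGreatest_spec (P := fun k => ∀ i < k, u[u.length - 1 - i]? = some (x i).inv)
      (m := 0) (Nat.zero_le _) (fun _ h => by omega) i hi
  have hlen : (invRev (u.drop (u.length - k))).length = k := by simp; omega
  refine ⟨u.take (u.length - k), u.drop (u.length - k), fun n => x (k + n),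
    (List.take_append_drop _ _).symm, funext fun n => ?_, fun c hc hce => ?_⟩
  · by_cases hn : n < k
    · have := hspec n hn
      rw [List.getElem?_eq_getElem (by omega), Option.some.injEq] at this
      rw [prependSeq_of_lt (by rw [hlen]; exact hn), getElem_invRev, List.getElem_drop,
        Letter.eq_inv_comm, ← this]
      congr 1; simp only [List.length_drop]; omega
    · rw [prependSeq_of_le (by omega), hlen, Nat.add_sub_cancel' (by omega)]
  · have hv : 0 < u.length - k := by
      by_contra h0; rw [show u.length - k = 0 by omega] at hc; simp at hc
    rw [List.getLast?_eq_getElem?, List.getElem?_take, if_pos (by simp; omega)] at hc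
    simp only [List.length_take, min_eq_left (Nat.sub_le _ _)] at hc
    refine Nat.findGreatest_is_greatest (P := fun k => ∀ i < k, u[u.length - 1 - i]? =
      some (x i).inv) (n := u.length) (k := k + 1) (Nat.lt_succ_self k) (by omega) fun i hi => ?_
    rcases Nat.lt_or_ge i k with h | h
    · exact hspec i h
    · rw [show i = k by omega, show u.length - 1 - k = u.length - k - 1 by omega, hc, hce]
      simp

lemma concatReduce_cons {a : Letter d} {l : List (Letter d)} (hl : IsReduced (a :: l))
    (x : ℕ → Letter d) : concatReduce (a :: l) x = consReduce a (concatReduce l x) := by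
  obtain ⟨v, r, y, rfl, rfl, hJ⟩ := exists_append_prependSeq_invRev l x
  rw [concatReduce_append rfl hJ]
  rcases v with _ | ⟨b, v⟩
  · simp only [List.nil_append, prependSeq_nil]
    by_cases hy : y 0 = a.inv
    · have hx : prependSeq (invRev r) y = prependSeq (invRev (a :: r)) fun n => y (n + 1) := by
        rw [invRev_cons, Letter.invRev_singleton, prependSeq_append, ← hy, prependSeq_head_tail]
      rw [consReduce_of_eq hy]
      simpa using concatReduce_append (v := []) hx (by simp)
    · rw [consReduce_of_ne hy]
      exact concatReduce_append (v := [a]) rfl (by simpa [Letter.eq_inv_comm] using hy)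
  · have hb : b ≠ a.inv := Letter.ne_inv_iff.mpr (isReduced_cons_cons.mp hl).1
    rw [consReduce_of_ne (by simpa using hb), ← prependSeq_append]
    exact concatReduce_append (v := a :: b :: v) rfl (by simpa [List.getLast?_cons_cons] using hJ)

def letterPerm (a : Letter d) : Equiv.Perm (Boundary d) where
  toFun x := ⟨consReduce a x.1, x.2.consReduce a⟩
  invFun x := ⟨consReduce a.inv x.1, x.2.consReduce a.inv⟩
  left_inv x := Subtype.ext (by simpa using consReduce_consReduce_inv x.2 a.inv)
  right_inv x := Subtype.ext (consReduce_consReduce_inv x.2 a)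

def boundaryPerm : FreeGroup (Fin d) →* Equiv.Perm (Boundary d) :=
  FreeGroup.lift fun i => letterPerm (i, true)

instance : MulAction (FreeGroup (Fin d)) (Boundary d) := MulAction.compHom _ boundaryPerm

lemma mk_singleton_smul_coe (a : Letter d) (x : Boundary d) :
    (mk [a] • x).1 = consReduce a x.1 := by
  obtain ⟨i, _ | _⟩ := a <;> rfl

lemma concatReduce_eq_smul {L : List (Letter d)} (hL : IsReduced L) (x : Boundary d) :
    concatReduce L x.1 = (mk L • x).1 := by
  induction L with
  | nil => simpa [← one_eq_mk] using concatReduce_append (v := []) (r := []) (y := x.1) rfl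
  | cons a l ih =>
    rw [concatReduce_cons hL, ih hL.tail, ← List.singleton_append, ← mul_mk, mul_smul,
      mk_singleton_smul_coe]

lemma boundaryAct_eq_smul (g : FreeGroup (Fin d)) (x : Boundary d) : boundaryAct g x = g • x := by
  have h := concatReduce_eq_smul (isReduced_toWord (x := g)) x
  rw [mk_toWord] at h
  rw [boundaryAct, dif_pos (h ▸ (g • x).2)]
  exact Subtype.ext h

lemma pFun_of_toWord_eq_singleton {w : FreeGroup (Fin d)} {a : Letter d} (hw : w.toWord = [a])
    (x : Boundary d) : pFun w x = if x.1 0 = a then 1 else 0 := by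
  simp [pFun, hw, eq_comm]

lemma qFun_eq (s : Fin d) (x : Boundary d) : qFun s x = if (x.1 0).1 = s then 1 else 0 := by
  rw [qFun, pFun_of_toWord_eq_singleton (toWord_of s),
    pFun_of_toWord_eq_singleton (a := (s, false)) (by simp [toWord_inv, invRev])]
  obtain ⟨i, _ | _⟩ := x.1 0 <;> by_cases h : i = s <;> simp [h]

def constPoint (a : Letter d) : Boundary d :=
  ⟨fun _ => a, fun _ h => a.inv_ne_self h.symm⟩

lemma mk_singleton_smul_constPoint {a b : Letter d} (h : b.1 = a.1) :
    mk [b] • constPoint a = constPoint a := by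
  refine Subtype.ext ?_
  rw [mk_singleton_smul_coe]
  by_cases hb : a = b
  · rw [← hb, consReduce_of_ne (a.inv_ne_self.symm)]
    funext n; cases n <;> rfl
  · rw [consReduce_of_eq (show a = b.inv from
      Letter.eq_inv_comm.mpr (Letter.eq_inv_of_ne_of_fst_eq hb h.symm))]
    rfl

lemma mk_smul_coe_of_isReduced {p : List (Letter d)} {z : Boundary d} (hp : IsReduced p)
    (hJ : ∀ c ∈ p.getLast?, c ≠ (z.1 0).inv) : (mk p • z).1 = prependSeq p z.1 := by
  rw [← concatReduce_eq_smul hp]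
  simpa using concatReduce_append (v := p) (r := []) (y := z.1) (by simp) hJ

lemma fst_smul_constPoint_zero_inv (g : FreeGroup (Fin d)) (a : Letter d) :
    ((g • constPoint a).1 0).1 = ((g • constPoint a.inv).1 0).1 := by
  suffices key : ∀ L : List (Letter d), IsReduced L →
      ((mk L • constPoint a).1 0).1 = ((mk L • constPoint a.inv).1 0).1 by
    simpa only [mk_toWord] using key g.toWord isReduced_toWord
  intro L
  induction L using List.reverseRecOn with
  | nil => intro _; simp [← one_eq_mk, constPoint, Letter.inv]
  | append_singleton L b ih =>
    intro hL
    by_cases hb : b.1 = a.1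
    · rw [← mul_mk, mul_smul, mul_smul, mk_singleton_smul_constPoint hb,
        mk_singleton_smul_constPoint (a := a.inv) hb]
      exact ih (hL.infix (List.prefix_append L [b]).isInfix)
    · have hJ : ∀ e : Letter d, e.1 = a.1 → ∀ c ∈ (L ++ [b]).getLast?, c ≠ e.inv := by
        intro e he c hc hce
        simp only [List.getLast?_append, List.getLast?_singleton, Option.some_or,
          Option.mem_def, Option.some.injEq] at hc
        exact hb (by rw [hc, hce, ← he]; rfl)
      rw [mk_smul_coe_of_isReduced hL (hJ a rfl), mk_smul_coe_of_isReduced hL (hJ a.inv rfl)]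
      cases L <;> simp

lemma toWord_mk_singleton_pow (a : Letter d) (n : ℕ) :
    ((mk [a]) ^ n).toWord = List.replicate n a := by
  simp [List.flatten_replicate_singleton]

lemma isPlusLimit_mk_singleton_iff (a : Letter d) (x : Boundary d) :
    IsPlusLimit (mk [a]) x ↔ x = constPoint a := by
  simp only [IsPlusLimit, toWord_mk_singleton_pow, List.length_replicate]
  constructor
  · intro h
    refine Subtype.ext (funext fun i => ?_)
    obtain ⟨N, hN⟩ := h (i + 1)
    have := (hN (max N (i + 1)) (le_max_left _ _)).2 i (Nat.lt_succ_self i)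
    rw [List.getElem?_replicate, if_pos (by omega), Option.some.injEq] at this
    exact this.symm
  · rintro rfl k
    exact ⟨k, fun n hn => ⟨hn, fun i hi => by simp [List.getElem?_replicate, constPoint]; omega⟩⟩

lemma inv_mk_singleton (a : Letter d) : (mk [a])⁻¹ = mk [a.inv] := inv_mk

lemma mem_range_of_or_inv_mem_iff (w : FreeGroup (Fin d)) :
    (w ∈ Set.range of ∨ w⁻¹ ∈ Set.range of) ↔ ∃ a : Letter d, w = mk [a] := by
  constructor
  · rintro (⟨s, rfl⟩ | ⟨s, hs⟩)
    · exact ⟨(s, true), rfl⟩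
    · exact ⟨(s, false), by rw [← inv_inv w, ← hs]; exact inv_mk_singleton (s, true)⟩
  · rintro ⟨⟨s, _ | _⟩, rfl⟩
    · exact Or.inr ⟨s, (inv_mk_singleton (s, false)).symm⟩
    · exact Or.inl ⟨s, rfl⟩

lemma constPoint_mem_RW (a : Letter d) :
    (constPoint a, constPoint a.inv) ∈ RW (Set.range (of : Fin d → FreeGroup (Fin d))) :=
  Or.inr ⟨1, mk [a], _, _, (mem_range_of_or_inv_mem_iff _).mpr ⟨a, rfl⟩,
    (isPlusLimit_mk_singleton_iff _ _).mpr rfl,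
    by rw [inv_mk_singleton, isPlusLimit_mk_singleton_iff],
    by rw [boundaryAct_eq_smul, one_smul], by rw [boundaryAct_eq_smul, one_smul]⟩

lemma qFun_smul_eq_of_mem_RW (s : Fin d) (g : FreeGroup (Fin d)) {x y : Boundary d}
    (h : (x, y) ∈ RW (Set.range (of : Fin d → FreeGroup (Fin d)))) :
    qFun s (g • x) = qFun s (g • y) := by
  obtain h | ⟨k, w, xp, xm, hw, hp, hm, rfl, rfl⟩ := h
  · rw [show x = y from h]
  obtain ⟨a, rfl⟩ := (mem_range_of_or_inv_mem_iff w).mp hw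
  rw [isPlusLimit_mk_singleton_iff] at hp
  rw [inv_mk_singleton, isPlusLimit_mk_singleton_iff] at hm
  rw [hp, hm, boundaryAct_eq_smul, boundaryAct_eq_smul, smul_smul, smul_smul, qFun_eq, qFun_eq,
    fst_smul_constPoint_zero_inv]

lemma smul_mem_RW {W : Set (FreeGroup (Fin d))} {x y : Boundary d} (h : (x, y) ∈ RW W)
    (g : FreeGroup (Fin d)) : (g • x, g • y) ∈ RW W := by
  obtain h | ⟨k, w, xp, xm, hw, hp, hm, rfl, rfl⟩ := h
  · exact Or.inl (congrArg (g • ·) h)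
  · refine Or.inr ⟨g * k, w, xp, xm, hw, hp, hm, ?_, ?_⟩ <;>
      simp only [boundaryAct_eq_smul, mul_smul]

lemma inv_mk_singleton_smul_coe_of_eq {a : Letter d} {x : Boundary d} (hx : x.1 0 = a) :
    ((mk [a])⁻¹ • x).1 = fun n => x.1 (n + 1) := by
  rw [inv_mk_singleton, mk_singleton_smul_coe, consReduce_of_eq (by simpa using hx)]

lemma inv_mk_singleton_smul_coe_of_ne {a : Letter d} {x : Boundary d} (hx : x.1 0 ≠ a) :
    ((mk [a])⁻¹ • x).1 = prependSeq [a.inv] x.1 := by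
  rw [inv_mk_singleton, mk_singleton_smul_coe, consReduce_of_ne (by simpa using hx)]

def QSeparated (x y : Boundary d) : Prop :=
  ∃ (g : FreeGroup (Fin d)) (s : Fin d), qFun s (g⁻¹ • x) ≠ qFun s (g⁻¹ • y)

lemma QSeparated.symm {x y : Boundary d} (h : QSeparated x y) : QSeparated y x :=
  let ⟨g, s, hgs⟩ := h; ⟨g, s, hgs.symm⟩

lemma qSeparated_smul_iff (h : FreeGroup (Fin d)) {x y : Boundary d} :
    QSeparated (h • x) (h • y) ↔ QSeparated x y := by
  constructor
  · rintro ⟨g, s, hgs⟩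
    exact ⟨h⁻¹ * g, s, by simpa [mul_smul] using hgs⟩
  · rintro ⟨g, s, hgs⟩
    exact ⟨h * g, s, by simpa [mul_smul] using hgs⟩

lemma qSeparated_of_fst_ne {x y : Boundary d} (h : (x.1 0).1 ≠ (y.1 0).1) : QSeparated x y :=
  ⟨1, (x.1 0).1, by simp [qFun_eq, Ne.symm h]⟩

lemma qSeparated_of_eq_inv (m : ℕ) :
    ∀ x y : Boundary d, x.1 m ≠ x.1 0 → y.1 0 = (x.1 0).inv → QSeparated x y := by
  induction m with
  | zero => exact fun x y hm _ => absurd rfl hm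
  | succ m ih =>
    intro x y hm hy
    rw [← qSeparated_smul_iff (mk [x.1 0])⁻¹]
    have hx' := inv_mk_singleton_smul_coe_of_eq (rfl : x.1 0 = x.1 0)
    have hy' := inv_mk_singleton_smul_coe_of_ne (hy ▸ (x.1 0).inv_ne_self)
    by_cases h1 : x.1 1 = x.1 0
    · exact ih _ _ (by rw [hx']; simpa [h1] using hm) (by rw [hx', hy']; simp [h1])
    · refine qSeparated_of_fst_ne ?_
      rw [hx', hy']
      intro hfst
      exact x.2 0 (Letter.eq_inv_of_ne_of_fst_eq (Ne.symm h1) hfst.symm)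

lemma qSeparated_of_ne_zero {x y : Boundary d} (h0 : x.1 0 ≠ y.1 0)
    (hR : (x, y) ∉ RW (Set.range (of : Fin d → FreeGroup (Fin d)))) : QSeparated x y := by
  by_cases hfst : (x.1 0).1 = (y.1 0).1
  · have hy : y.1 0 = (x.1 0).inv := Letter.eq_inv_of_ne_of_fst_eq h0 hfst
    by_cases hx : x = constPoint (x.1 0)
    · have hy' : y ≠ constPoint (x.1 0).inv := fun hy' => hR (hx ▸ hy' ▸ constPoint_mem_RW _)
      obtain ⟨m, hm⟩ : ∃ m, y.1 m ≠ y.1 0 := by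
        by_contra! h
        exact hy' (Subtype.ext (funext fun n => (h n).trans hy))
      exact (qSeparated_of_eq_inv m y x hm (by rw [hy, Letter.inv_inv])).symm
    · obtain ⟨m, hm⟩ : ∃ m, x.1 m ≠ x.1 0 := by
        by_contra! h
        exact hx (Subtype.ext (funext h))
      exact qSeparated_of_eq_inv m x y hm hy
  · exact qSeparated_of_fst_ne hfst

lemma qSeparated_of_ne (n : ℕ) : ∀ x y : Boundary d, x.1 n ≠ y.1 n →
    (x, y) ∉ RW (Set.range (of : Fin d → FreeGroup (Fin d))) → QSeparated x y := by
  induction n with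
  | zero => exact fun x y h0 hR => qSeparated_of_ne_zero h0 hR
  | succ n ih =>
    intro x y hn hR
    by_cases h0 : x.1 0 = y.1 0
    · rw [← qSeparated_smul_iff (mk [x.1 0])⁻¹]
      refine ih _ _ ?_ fun hR' => hR ?_
      · rwa [inv_mk_singleton_smul_coe_of_eq rfl, inv_mk_singleton_smul_coe_of_eq h0.symm]
      · simpa only [smul_inv_smul] using smul_mem_RW hR' (mk [x.1 0])
    · exact qSeparated_of_ne_zero h0 hR

end

theorem translates_of_q_separate_RS_general (d : ℕ) :
    (∀ (s : Fin d) (g : FreeGroup (Fin d)) (x y : Boundary d),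
      (x, y) ∈ RW (Set.range (FreeGroup.of : Fin d → FreeGroup (Fin d))) →
      qFun s (boundaryAct g⁻¹ x) = qFun s (boundaryAct g⁻¹ y)) ∧
    (∀ x y : Boundary d,
      (x, y) ∉ RW (Set.range (FreeGroup.of : Fin d → FreeGroup (Fin d))) →
      ∃ (g : FreeGroup (Fin d)) (s : Fin d),
        qFun s (boundaryAct g⁻¹ x) ≠ qFun s (boundaryAct g⁻¹ y)) := by
  simp only [boundaryAct_eq_smul]
  refine ⟨fun s g x y h => qFun_smul_eq_of_mem_RW s g⁻¹ h, fun x y hR => ?_⟩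
  obtain ⟨n, hn⟩ := Function.ne_iff.mp fun h => hR (Or.inl (Subtype.ext h))
  exact qSeparated_of_ne n x y hn hR

/-- For every generator `s` and every `g ∈ F_d`, the function
`x ↦ q[s](g⁻¹·x)` is constant on each equivalence class of `R_S`; moreover this
family separates the classes of `R_S`. -/
theorem translates_of_q_separate_RS (d : ℕ) (hd : 2 ≤ d) :
    (∀ (s : Fin d) (g : FreeGroup (Fin d)) (x y : Boundary d),
      (x, y) ∈ RW (Set.range (FreeGroup.of : Fin d → FreeGroup (Fin d))) →
      qFun s (boundaryAct g⁻¹ x) = qFun s (boundaryAct g⁻¹ y)) ∧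
    (∀ x y : Boundary d,
      (x, y) ∉ RW (Set.range (FreeGroup.of : Fin d → FreeGroup (Fin d))) →
      ∃ (g : FreeGroup (Fin d)) (s : Fin d),
        qFun s (boundaryAct g⁻¹ x) ≠ qFun s (boundaryAct g⁻¹ y)) :=
  translates_of_q_separate_RS_general d
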